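/- Let t ∈ (0,1) and x₂, x₃ ∈ ℝ. There exists a unique pair of differentiable functions y₂, y₃ : [0,t] → ℝ satisfying, for all h ∈ [0,t], y₂′(h) = −(3/2 − 2·y₂(h))/(1−h) and y₃′(h) = −(3/2)·(y₂(h) + 1 − 2·y₃(h))/(1−h), together with the terminal conditions y₂(t) = x₂ and y₃(t) = x₃; moreover this solution satisfies y₃(0) = γ(x₂,x₃,t). -/

import Mathlib

/-- γ(x₂,x₃,t) = (1−t)³·x₃ + (3t/2)·(1−t)²·x₂ + (t/8)·(12 − 3t − 2t²) -/
noncomputable def gammaUC (x₂ x₃ t : ℝ) : ℝ :=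
  (1 - t) ^ 3 * x₃ + (3 * t / 2) * (1 - t) ^ 2 * x₂ + (t / 8) * (12 - 3 * t - 2 * t ^ 2)

/-- The pair (y₂, y₃) solves the backward ODE system on [0,t] with terminal data (x₂,x₃):
y₂′(h) = −(3/2 − 2·y₂(h))/(1−h), y₃′(h) = −(3/2)·(y₂(h) + 1 − 2·y₃(h))/(1−h),
y₂(t) = x₂, y₃(t) = x₃. -/
def IsODESol (t x₂ x₃ : ℝ) (y₂ y₃ : ℝ → ℝ) : Prop :=
  (∀ h ∈ Set.Icc (0 : ℝ) t,
      HasDerivWithinAt y₂ (-(3 / 2 - 2 * y₂ h) / (1 - h)) (Set.Icc (0 : ℝ) t) h) ∧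
  (∀ h ∈ Set.Icc (0 : ℝ) t,
      HasDerivWithinAt y₃ (-(3 / 2) * (y₂ h + 1 - 2 * y₃ h) / (1 - h)) (Set.Icc (0 : ℝ) t) h) ∧
  y₂ t = x₂ ∧ y₃ t = x₃

/-!
The substitutions u = y₂ − 3/4 and w = y₃ − (3/2)·y₂ + 1/4 decouple the system into
u′ = 2u/(1−h) and w′ = 3w/(1−h). A solution of u′ = k·u/(c−h) keeps u·(c−h)^k constant, so it
is determined by its terminal value, and the resulting closed form evaluated at h = 0 is γ.
-/

open Set

theorem hasDerivAt_mul_div_sub_pow (u₀ d c : ℝ) (k : ℕ) {h : ℝ} (hh : c - h ≠ 0) :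
    HasDerivAt (fun x => u₀ * (d / (c - x)) ^ k) (k * (u₀ * (d / (c - h)) ^ k) / (c - h)) h := by
  have hd : HasDerivAt (fun x => d / (c - x)) (d / (c - h) ^ 2) h := by
    simpa using (hasDerivAt_const h d).fun_div ((hasDerivAt_id h).const_sub c) hh
  refine ((hd.fun_pow k).const_mul u₀).congr_deriv ?_
  rcases k with _ | k
  · simp
  · simp only [pow_succ]
    field_simp
    push_cast
    ring

theorem eq_mul_div_sub_pow_of_hasDerivWithinAt {a b c : ℝ} {u : ℝ → ℝ} (k : ℕ) (hbc : b < c)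
    (hu : ∀ h ∈ Icc a b, HasDerivWithinAt u (k * u h / (c - h)) (Icc a b) h) :
    ∀ h ∈ Icc a b, u h = u b * ((c - b) / (c - h)) ^ k := by
  have hne : ∀ h ∈ Icc a b, c - h ≠ 0 := fun h hh => (sub_pos.2 (hh.2.trans_lt hbc)).ne'
  have hg : ∀ h ∈ Icc a b, HasDerivWithinAt (fun x => u x * (c - x) ^ k) 0 (Icc a b) h := by
    intro h hh
    refine ((hu h hh).fun_mul
      (((hasDerivAt_id h).const_sub c).fun_pow k).hasDerivWithinAt).congr_deriv ?_
    rcases k with _ | k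
    · simp
    · simp only [id, pow_succ]
      field_simp [hne h hh]
      push_cast
      ring
  have hconst := constant_of_has_deriv_right_zero (fun h hh => (hg h hh).continuousWithinAt)
    fun h hh => (hg h (Ico_subset_Icc_self hh)).mono_of_mem_nhdsWithin (Icc_mem_nhdsGE_of_mem hh)
  intro h hh
  have hinv : u h * (c - h) ^ k = u b * (c - b) ^ k :=
    (hconst h hh).trans (hconst b (right_mem_Icc.2 (hh.1.trans hh.2))).symm
  rw [div_pow, mul_div_assoc', eq_div_iff (pow_ne_zero k (hne h hh)), hinv]

noncomputable def odeSolY₂ (t x₂ h : ℝ) : ℝ :=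
  3 / 4 + (x₂ - 3 / 4) * ((1 - t) / (1 - h)) ^ 2

noncomputable def odeSolY₃ (t x₂ x₃ h : ℝ) : ℝ :=
  3 / 2 * odeSolY₂ t x₂ h - 1 / 4 + (x₃ - 3 / 2 * x₂ + 1 / 4) * ((1 - t) / (1 - h)) ^ 3

theorem odeSolY₃_zero (t x₂ x₃ : ℝ) : odeSolY₃ t x₂ x₃ 0 = gammaUC x₂ x₃ t := by
  simp only [odeSolY₃, odeSolY₂, gammaUC, sub_zero, div_one]
  ring

section

variable {t x₂ x₃ : ℝ}

theorem isODESol_odeSol (ht : t < 1) :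
    IsODESol t x₂ x₃ (odeSolY₂ t x₂) (odeSolY₃ t x₂ x₃) := by
  have hne : ∀ h ∈ Icc 0 t, (1 : ℝ) - h ≠ 0 := fun h hh => (sub_pos.2 (hh.2.trans_lt ht)).ne'
  have hY₂ : ∀ h ∈ Icc 0 t, HasDerivAt (odeSolY₂ t x₂)
      ((2 : ℕ) * ((x₂ - 3 / 4) * ((1 - t) / (1 - h)) ^ 2) / (1 - h)) h := fun h hh =>
    (hasDerivAt_mul_div_sub_pow (x₂ - 3 / 4) (1 - t) 1 2 (hne h hh)).const_add (3 / 4)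
  refine ⟨fun h hh => ?_, fun h hh => ?_, ?_, ?_⟩
  · refine (hY₂ h hh).hasDerivWithinAt.congr_deriv ?_
    simp only [odeSolY₂]
    field_simp [hne h hh]
    ring
  · have hY₃ := (((hY₂ h hh).const_mul (3 / 2)).sub_const (1 / 4)).add
      (hasDerivAt_mul_div_sub_pow (x₃ - 3 / 2 * x₂ + 1 / 4) (1 - t) 1 3 (hne h hh))
    refine hY₃.hasDerivWithinAt.congr_deriv ?_
    simp only [odeSolY₃, odeSolY₂]
    field_simp [hne h hh]
    ring
  · simp [odeSolY₂, (sub_pos.2 ht).ne']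
  · simp [odeSolY₃, odeSolY₂, (sub_pos.2 ht).ne']

namespace IsODESol

variable {y₂ y₃ : ℝ → ℝ}

theorem eqOn_odeSolY₂ (ht : t < 1) (hy : IsODESol t x₂ x₃ y₂ y₃) :
    EqOn y₂ (odeSolY₂ t x₂) (Icc 0 t) := by
  obtain ⟨hy₂, -, hy₂t, -⟩ := hy
  have hu := eq_mul_div_sub_pow_of_hasDerivWithinAt (u := fun h => y₂ h - 3 / 4) 2 ht
    fun h hh => ((hy₂ h hh).sub_const (3 / 4)).congr_deriv (by push_cast; ring)
  intro h hh
  simp only [odeSolY₂, ← hy₂t, ← hu h hh]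
  ring

theorem eqOn_odeSolY₃ (ht : t < 1) (hy : IsODESol t x₂ x₃ y₂ y₃) :
    EqOn y₃ (odeSolY₃ t x₂ x₃) (Icc 0 t) := by
  have h₂ := eqOn_odeSolY₂ ht hy
  obtain ⟨hy₂, hy₃, hy₂t, hy₃t⟩ := hy
  have hu := eq_mul_div_sub_pow_of_hasDerivWithinAt
    (u := fun h => y₃ h - 3 / 2 * y₂ h + 1 / 4) 3 ht
    fun h hh => (((hy₃ h hh).sub ((hy₂ h hh).const_mul (3 / 2))).add_const (1 / 4)).congr_deriv
      (by push_cast; ring)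
  intro h hh
  rw [odeSolY₃, ← h₂ hh, ← hy₂t, ← hy₃t]
  linarith [hu h hh]

end IsODESol

end

theorem ode_solution_unique_and_gamma (t x₂ x₃ : ℝ) (ht : t ∈ Set.Ioo (0 : ℝ) 1) :
    ∃ y₂ y₃ : ℝ → ℝ, IsODESol t x₂ x₃ y₂ y₃ ∧
      (∀ z₂ z₃ : ℝ → ℝ, IsODESol t x₂ x₃ z₂ z₃ →
        Set.EqOn z₂ y₂ (Set.Icc 0 t) ∧ Set.EqOn z₃ y₃ (Set.Icc 0 t)) ∧
      y₃ 0 = gammaUC x₂ x₃ t :=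
  ⟨odeSolY₂ t x₂, odeSolY₃ t x₂ x₃, isODESol_odeSol ht.2,
    fun _ _ hz => ⟨hz.eqOn_odeSolY₂ ht.2, hz.eqOn_odeSolY₃ ht.2⟩, odeSolY₃_zero t x₂ x₃⟩
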